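/- The diamond K_4 − e (the complete graph on 4 vertices with one edge removed) is not a TS_k-reconfiguration graph for any integer k ≥ 2; i.e., there is no graph G with TS_k(G) isomorphic to K_4 − e. -/

import Mathlib

open SimpleGraph

/-- `I` is an independent (stable) set of `G`. -/
def IsIndep {V : Type*} (G : SimpleGraph V) (I : Finset V) : Prop :=
  ∀ u ∈ I, ∀ v ∈ I, ¬ G.Adj u v

/-- Vertices of the `TS_k`-reconfiguration graph: size-`k` independent sets of `G`. -/
abbrev TSVert {V : Type*} (G : SimpleGraph V) (k : ℕ) := {I : Finset V // I.card = k ∧ IsIndep G I}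

/-- The `TS_k`-reconfiguration graph of `G`: size-`k` independent sets, adjacent iff
`I \ J = {u}`, `J \ I = {v}` and `uv ∈ E(G)`. -/
def TSk {V : Type*} [DecidableEq V] (G : SimpleGraph V) (k : ℕ) : SimpleGraph (TSVert G k) :=
  SimpleGraph.fromRel (fun I J =>
    ∃ u v, (I : Finset V) \ (J : Finset V) = {u} ∧
      (J : Finset V) \ (I : Finset V) = {v} ∧ G.Adj u v)

/-- The diamond `K_4 − e`: the complete graph on four vertices with one edge removed. -/
def diamond : SimpleGraph (Fin 4) :=
  (⊤ : SimpleGraph (Fin 4)).deleteEdges {s((0 : Fin 4), (1 : Fin 4))}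

/-! In a triangle of `TS_k` the two edges at a vertex move the same token out of it. Applied to
the triangles `ABC` and `BCD` of an induced diamond (`A`, `D` the non-adjacent pair), this
forces `A = S ∪ {a}` and `D = S ∪ {d}` with `|S| = k - 1 ≥ 1`. Since `A` and `D` are not
adjacent, neither are `a` and `d` in `G`, so removing any `s ∈ S` from `A ∪ D` leaves an
independent `k`-set that avoids `s`, hence a fifth vertex of `TS_k`. -/

section

variable {V : Type*} {G : SimpleGraph V}

lemma IsIndep.mono {I J : Finset V} (hJ : IsIndep G J) (h : I ⊆ J) : IsIndep G I :=
  fun u hu v hv => hJ u (h hu) v (h hv)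

variable [DecidableEq V]

lemma IsIndep.union_of_not_adj {I J : Finset V} {a d : V} (hI : IsIndep G I)
    (hJ : IsIndep G J) (ha : I \ J = {a}) (hd : J \ I = {d}) (had : ¬ G.Adj a d) : IsIndep G (I ∪ J) := by
  have cross : ∀ u ∈ I, ∀ v ∈ J, ¬ G.Adj u v := by
    intro u hu v hv
    by_cases huJ : u ∈ J
    · exact hJ u huJ v hv
    by_cases hvI : v ∈ I
    · exact hI u hu v hvI
    have hua : u = a := Finset.mem_singleton.mp (ha ▸ Finset.mem_sdiff.mpr ⟨hu, huJ⟩)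
    have hvd : v = d := Finset.mem_singleton.mp (hd ▸ Finset.mem_sdiff.mpr ⟨hv, hvI⟩)
    exact hua ▸ hvd ▸ had
  intro u hu v hv
  rcases Finset.mem_union.mp hu with hu | hu <;> rcases Finset.mem_union.mp hv with hv | hv
  · exact hI u hu v hv
  · exact cross u hu v hv
  · exact fun h => cross v hv u hu h.symm
  · exact hJ u hu v hv

namespace TSk

variable {k : ℕ} {I J K : TSVert G k}

lemma adj_iff : (TSk G k).Adj I J ↔
    ∃ u v, (I : Finset V) \ J = {u} ∧ (J : Finset V) \ I = {v} ∧ G.Adj u v := by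
  rw [TSk, fromRel_adj]
  constructor
  · rintro ⟨-, h | ⟨u, v, hu, hv, huv⟩⟩
    · exact h
    · exact ⟨v, u, hv, hu, huv.symm⟩
  · rintro ⟨u, v, hu, hv, huv⟩
    refine ⟨fun hIJ => ?_, Or.inl ⟨u, v, hu, hv, huv⟩⟩
    simp [hIJ] at hu

lemma card_inter_add_one_of_adj (h : (TSk G k).Adj I J) :
    ((I : Finset V) ∩ J).card + 1 = k := by
  obtain ⟨u, -, hu, -, -⟩ := adj_iff.mp h
  have := Finset.card_inter_add_card_sdiff (I : Finset V) J
  rw [hu, Finset.card_singleton, I.2.1] at this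
  exact this

lemma card_inter_lt_of_ne (h : I ≠ J) : ((I : Finset V) ∩ J).card < k := by
  by_contra! hle
  have hI : (I : Finset V) ∩ J = I :=
    Finset.eq_of_subset_of_card_le Finset.inter_subset_left (by rw [I.2.1]; exact hle)
  have hJ : (I : Finset V) ∩ J = J :=
    Finset.eq_of_subset_of_card_le Finset.inter_subset_right (by rw [J.2.1]; exact hle)
  exact h (Subtype.ext (hI.symm.trans hJ))

/-- Otherwise the two tokens leaving `I` would be the ends of the edge of `G` moved along `J`–`K`,
contradicting the independence of `I`. -/
lemma inter_eq_of_triangle (hIJ : (TSk G k).Adj I J) (hIK : (TSk G k).Adj I K)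
    (hJK : (TSk G k).Adj J K) : (I : Finset V) ∩ J = (I : Finset V) ∩ K := by
  obtain ⟨a, -, ha, -, -⟩ := adj_iff.mp hIJ
  obtain ⟨a', -, ha', -, -⟩ := adj_iff.mp hIK
  obtain ⟨x, y, hx, hy, hxy⟩ := adj_iff.mp hJK
  suffices (I : Finset V) \ J = (I : Finset V) \ K by
    rw [← Finset.sdiff_sdiff_self_left, this, Finset.sdiff_sdiff_self_left]
  rw [ha, ha', Finset.singleton_inj]
  by_contra hne
  simp only [Finset.ext_iff, Finset.mem_sdiff, Finset.mem_singleton] at ha ha' hx hy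
  have haI : a ∈ (I : Finset V) ∧ a ∉ (J : Finset V) := (ha a).mpr rfl
  have ha'I : a' ∈ (I : Finset V) ∧ a' ∉ (K : Finset V) := (ha' a').mpr rfl
  have haK : a ∈ (K : Finset V) := by_contra fun h => hne ((ha' a).mp ⟨haI.1, h⟩)
  have ha'J : a' ∈ (J : Finset V) := by_contra fun h => hne ((ha a').mp ⟨ha'I.1, h⟩).symm
  have hay : a = y := (hy a).mp ⟨haK, haI.2⟩
  have ha'x : a' = x := (hx a').mp ⟨ha'J, ha'I.2⟩
  exact I.2.2 a' ha'I.1 a haI.1 (hay ▸ ha'x ▸ hxy)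

lemma exists_eq_union_erase (hIJ : ¬ (TSk G k).Adj I J)
    (hcard : ((I : Finset V) ∩ J).card + 1 = k) {s : V} (hs : s ∈ (I : Finset V) ∩ J) :
    ∃ E : TSVert G k, (E : Finset V) = ((I : Finset V) ∪ J).erase s := by
  have hIJcard := Finset.card_inter_add_card_sdiff (I : Finset V) J
  have hJIcard := Finset.card_inter_add_card_sdiff (J : Finset V) I
  rw [Finset.inter_comm] at hJIcard
  obtain ⟨a, ha⟩ := Finset.card_eq_one.mp (show ((I : Finset V) \ J).card = 1 by omega)
  obtain ⟨d, hd⟩ := Finset.card_eq_one.mp (show ((J : Finset V) \ I).card = 1 by omega)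
  have had : ¬ G.Adj a d := fun h => hIJ (adj_iff.mpr ⟨a, d, ha, hd, h⟩)
  have hunion := Finset.card_union_add_card_inter (I : Finset V) J
  refine ⟨⟨((I : Finset V) ∪ J).erase s, ?_,
    (I.2.2.union_of_not_adj J.2.2 ha hd had).mono (Finset.erase_subset _ _)⟩, rfl⟩
  rw [Finset.card_erase_of_mem (Finset.mem_union_left _ (Finset.mem_inter.mp hs).1)]
  omega

lemma exists_ne_of_diamond (hk : 2 ≤ k) {A B C D : TSVert G k}
    (hAB : (TSk G k).Adj A B) (hAC : (TSk G k).Adj A C) (hBC : (TSk G k).Adj B C)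
    (hBD : (TSk G k).Adj B D) (hCD : (TSk G k).Adj C D) (hAD : ¬ (TSk G k).Adj A D)
    (hne : A ≠ D) : ∃ E : TSVert G k, E ≠ A ∧ E ≠ B ∧ E ≠ C ∧ E ≠ D := by
  set S := (A : Finset V) ∩ B
  have hSC : S = (A : Finset V) ∩ C := inter_eq_of_triangle hAB hAC hBC
  have hBA : (B : Finset V) ∩ A = (B : Finset V) ∩ C := inter_eq_of_triangle hAB.symm hBC hAC
  have hBC' : (B : Finset V) ∩ C = (B : Finset V) ∩ D := inter_eq_of_triangle hBC hBD hCD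
  have hScard : S.card + 1 = k := card_inter_add_one_of_adj hAB
  have hSD : S = (A : Finset V) ∩ D := by
    refine Finset.eq_of_subset_of_card_le (fun x hx => ?_) ?_
    · have hxBD : x ∈ (B : Finset V) ∩ D := by
        rwa [← hBC', ← hBA, Finset.inter_comm]
      exact Finset.mem_inter.mpr ⟨(Finset.mem_inter.mp hx).1, (Finset.mem_inter.mp hxBD).2⟩
    · have := card_inter_lt_of_ne hne
      omega
  obtain ⟨s, hs⟩ : S.Nonempty := Finset.card_pos.mp (by omega)
  obtain ⟨E, hE⟩ := exists_eq_union_erase hAD (hSD ▸ hScard) (hSD ▸ hs)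
  have hsE : s ∉ (E : Finset V) := by simp [hE]
  refine ⟨E, ?_, ?_, ?_, ?_⟩ <;> rintro rfl <;> apply hsE
  · exact (Finset.mem_inter.mp hs).1
  · exact (Finset.mem_inter.mp hs).2
  · exact (Finset.mem_inter.mp (hSC ▸ hs)).2
  · exact (Finset.mem_inter.mp (hSD ▸ hs)).2

end TSk

end

/-- The diamond `K_4 − e` is not a `TS_k`-reconfiguration graph for any `k ≥ 2`. -/
theorem stmt11 (k : ℕ) (hk : 2 ≤ k) :
    ¬ ∃ (W : Type) (_ : Fintype W) (dW : DecidableEq W) (G : SimpleGraph W),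
      Nonempty ((@TSk W dW G k) ≃g diamond) := by
  rintro ⟨W, _, dW, G, ⟨e⟩⟩
  have adj (i j : Fin 4) (h : diamond.Adj i j) : (TSk G k).Adj (e.symm i) (e.symm j) :=
    e.symm.map_rel_iff.mpr h
  have nonadj : ¬ (TSk G k).Adj (e.symm 0) (e.symm 1) := by
    rw [e.symm.map_rel_iff]
    simp [diamond]
  obtain ⟨E, h0, h2, h3, h1⟩ := TSk.exists_ne_of_diamond hk (adj 0 2 (by simp [diamond]))
    (adj 0 3 (by simp [diamond])) (adj 2 3 (by simp [diamond])) (adj 2 1 (by simp [diamond]))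
    (adj 3 1 (by simp [diamond])) nonadj (e.symm.injective.ne (by decide))
  have hE : e.symm (e E) = E := e.symm_apply_apply E
  generalize e E = i at hE
  fin_cases i
  exacts [h0 hE.symm, h1 hE.symm, h2 hE.symm, h3 hE.symm]
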